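/- The cocycle identity for Q̃: for γ₁, γ₂ in a splitting crystal group Γ, Q̃_{[s,t]}(γ₁γ₂) = Σ_{u=t}^{s} Q̃_{[s,u]}(γ₂) Q̃_{[u,t]}(γ₁). -/

import Mathlib

open scoped BigOperators
open Finset MeasureTheory

noncomputable section

/-- The vector `X_[s](x)` of all degree-`s` monomials of `x ∈ ℂ^d`, indexed by
multisets of size `s` over `Fin d` (i.e. `Sym (Fin d) s`). -/
def Xvec (d s : ℕ) (x : Fin d → ℂ) : Sym (Fin d) s → ℂ :=
  fun m => (Multiset.map x (m : Multiset (Fin d))).prod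

/-- `X_[s]` applied to a real vector. -/
def XvecR (d s : ℕ) (x : Fin d → ℝ) : Sym (Fin d) s → ℂ :=
  Xvec d s fun i => (x i : ℂ)

/-- `Mt` is the matrix `M_[t]` induced by `M` on degree-`t` monomials, i.e.
`X_[t](Mx) = M_[t] X_[t](x)` for all `x`. -/
def IsMonMat (d t : ℕ) (M : Matrix (Fin d) (Fin d) ℝ)
    (Mt : Matrix (Sym (Fin d) t) (Sym (Fin d) t) ℂ) : Prop :=
  ∀ x : Fin d → ℝ, XvecR d t (M.mulVec x) = Mt.mulVec (XvecR d t x)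

/-- `Q` is the family of matrices `Q_[s,t](y)` defined by the expansion
`X_[s](x - y) = ∑_{t=0}^{s} Q_[s,t](y) X_[t](x)`. -/
def IsQfam (d : ℕ)
    (Q : (s : ℕ) → (t : ℕ) → (Fin d → ℝ) → Matrix (Sym (Fin d) s) (Sym (Fin d) t) ℂ) : Prop :=
  ∀ (s : ℕ) (y x : Fin d → ℝ),
    XvecR d s (x - y) = ∑ t ∈ Finset.range (s + 1), (Q s t y).mulVec (XvecR d t x)

/-- A complex square matrix is expansive if all of its eigenvalues (roots of the
characteristic polynomial) have modulus strictly greater than `1`. -/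
def ExpansiveC {n : Type*} [Fintype n] [DecidableEq n] (M : Matrix n n ℂ) : Prop :=
  ∀ μ : ℂ, M.charpoly.IsRoot μ → 1 < ‖μ‖

/-- A real square matrix is expansive if all of its complex eigenvalues have
modulus strictly greater than `1`. -/
def ExpansiveR {n : Type*} [Fintype n] [DecidableEq n] (M : Matrix n n ℝ) : Prop :=
  ExpansiveC (M.map (algebraMap ℝ ℂ))

/-- Elements of a splitting crystal group `Γ = G ⋉ Λ`, written as pairs
`γ = (b, l)` with `b` a matrix (the point part) and `l` a vector. -/
abbrev CrystElem (d : ℕ) := Matrix (Fin d) (Fin d) ℝ × (Fin d → ℝ)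

/-- The action `γ(x) = b(x + l)` of `γ = (b, l)`. -/
def crystAct {d : ℕ} (γ : CrystElem d) (x : Fin d → ℝ) : Fin d → ℝ :=
  γ.1.mulVec (x + γ.2)

/-- The product `(b₂,l₂)·(b₁,l₁) = (b₂b₁, l₁ + b₁⁻¹ l₂)` (composition of the actions). -/
def crystMul {d : ℕ} (γ₂ γ₁ : CrystElem d) : CrystElem d :=
  (γ₂.1 * γ₁.1, γ₁.2 + (γ₁.1)⁻¹.mulVec γ₂.2)

/-- The inverse `(b,l)⁻¹ = (b⁻¹, -b l)`. -/
def crystInv {d : ℕ} (γ : CrystElem d) : CrystElem d :=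
  ((γ.1)⁻¹, -(γ.1.mulVec γ.2))

/-- Conjugation by an invertible matrix `A`:
`A (b,l) A⁻¹ = (A b A⁻¹, (A b A⁻¹)⁻¹ (A b l))`. -/
def crystConj {d : ℕ} (A : Matrix (Fin d) (Fin d) ℝ) (γ : CrystElem d) : CrystElem d :=
  (A * γ.1 * A⁻¹, (A * γ.1 * A⁻¹)⁻¹.mulVec ((A * γ.1).mulVec γ.2))

/-- `(G, Λ)` are the data of a splitting crystal group `Γ = G ⋉ Λ`: `G` is a
finite group of orthogonal matrices and `Λ` is a full-rank lattice preserved by `G`. -/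
def IsSplittingCrystal (d : ℕ) (G : Finset (Matrix (Fin d) (Fin d) ℝ))
    (Λ : Set (Fin d → ℝ)) : Prop :=
  (1 : Matrix (Fin d) (Fin d) ℝ) ∈ G ∧
  (∀ b ∈ G, ∀ b' ∈ G, b * b' ∈ G) ∧
  (∀ b ∈ G, b⁻¹ ∈ G) ∧
  (∀ b ∈ G, b * b.transpose = 1) ∧
  (∃ R : Matrix (Fin d) (Fin d) ℝ, IsUnit R.det ∧
      Λ = {v | ∃ k : Fin d → ℤ, v = R.mulVec fun i => (k i : ℝ)}) ∧
  (∀ b ∈ G, ∀ l ∈ Λ, b.mulVec l ∈ Λ)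

/-- The underlying set of `Γ = G ⋉ Λ`. -/
def crystSet {d : ℕ} (G : Finset (Matrix (Fin d) (Fin d) ℝ)) (Λ : Set (Fin d → ℝ)) :
    Set (CrystElem d) := {γ | γ.1 ∈ G ∧ γ.2 ∈ Λ}

/-- `A` is a `Γ`-admissible matrix: expansive and `AΓA⁻¹ ⊆ Γ`. -/
def IsAdmissible {d : ℕ} (G : Finset (Matrix (Fin d) (Fin d) ℝ)) (Λ : Set (Fin d → ℝ))
    (A : Matrix (Fin d) (Fin d) ℝ) : Prop :=
  ExpansiveR A ∧ ∀ γ ∈ crystSet G Λ, crystConj A γ ∈ crystSet G Λ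

/-!
Write `γ⁻¹ x = b⁻¹ x - l` for `γ = (b, l)`. Expanding `X_[s](γ⁻¹ x)` first by the definition of `Q`
and then through `X_[t](b⁻¹ x) = b_[t]⁻¹ X_[t](x)` shows that `Q̃_[s,t](γ)` is the coefficient of
`X_[t](x)` in `X_[s](γ⁻¹ x)`. The monomials are linearly independent as functions on `ℝ^d` (a
complex polynomial vanishing on `ℝ^d` is zero), so these coefficients are unique, and the cocycle
identity is the coefficient comparison in `X_[s]((γ₁γ₂)⁻¹ x) = X_[s](γ₂⁻¹(γ₁⁻¹ x))`. Since
`(b₁b₂)_[t] = b₁_[t] b₂_[t]`, the point part of `γ₁` splits off on the right, and only the case of a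
translation `γ₁ = (1, l₁)` needs the expansion argument.
-/

open MvPolynomial in
theorem XvecR_apply {d t : ℕ} (x : Fin d → ℝ) (m : Sym (Fin d) t) :
    XvecR d t x m =
      eval (fun i => (x i : ℂ)) (monomial (Multiset.toFinsupp (m : Multiset (Fin d))) 1) := by
  rw [eval_monomial, one_mul, Finsupp.prod, Multiset.toFinsupp_support]
  simp only [Multiset.toFinsupp_apply]
  exact Finset.prod_multiset_map_count _ _

open MvPolynomial in
theorem linearIndependent_eval_ofReal_monomial (d : ℕ) :
    LinearIndependent ℂ fun e : Fin d →₀ ℕ =>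
      fun x : Fin d → ℝ => eval (fun i => (x i : ℂ)) (monomial e 1) := by
  let evalReal : MvPolynomial (Fin d) ℂ →ₗ[ℂ] (Fin d → ℝ) → ℂ :=
    LinearMap.pi fun x => (aeval fun i => (x i : ℂ)).toLinearMap
  have hker : LinearMap.ker evalReal = ⊥ := by
    refine LinearMap.ker_eq_bot'.2 fun p hp => ?_
    refine funext_set (fun _ => Set.range ((↑) : ℝ → ℂ))
      (fun _ => Set.infinite_range_of_injective Complex.ofReal_injective) fun z hz => ?_
    choose x hx using fun i => hz i (Set.mem_univ i)
    rw [show z = fun i => (x i : ℂ) from funext fun i => (hx i).symm, map_zero]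
    exact congrFun hp x
  have := (basisMonomials (Fin d) ℂ).linearIndependent.map' evalReal hker
  rwa [coe_basisMonomials] at this

theorem linearIndependent_XvecR (d : ℕ) :
    LinearIndependent ℂ fun p : Σ t, Sym (Fin d) t => fun x => XvecR d p.1 x p.2 := by
  have hinj : Function.Injective fun p : Σ t, Sym (Fin d) t =>
      Multiset.toFinsupp (p.2 : Multiset (Fin d)) := by
    rintro ⟨t₁, m₁⟩ ⟨t₂, m₂⟩ h
    have hm : (m₁ : Multiset (Fin d)) = m₂ := Multiset.toFinsupp.injective h
    obtain rfl : t₁ = t₂ := by simpa using congrArg Multiset.card hm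
    rw [Sym.coe_injective hm]
  convert (linearIndependent_eval_ofReal_monomial d).comp _ hinj using 1
  ext p x
  exact XvecR_apply x p.2

open Matrix

theorem dotProduct_XvecR_injective {d t : ℕ} {c c' : Sym (Fin d) t → ℂ}
    (h : ∀ x, c ⬝ᵥ XvecR d t x = c' ⬝ᵥ XvecR d t x) : c = c' := by
  have hind := Fintype.linearIndependent_iff.1
    ((linearIndependent_XvecR d).comp _ (sigma_mk_injective (i := t))) (c - c') (funext fun x => ?_)
  · exact sub_eq_zero.1 (funext hind)
  · simp only [Finset.sum_apply, Pi.smul_apply, Function.comp_apply, Pi.sub_apply, smul_eq_mul,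
      sub_mul, Finset.sum_sub_distrib, Pi.zero_apply]
    exact sub_eq_zero.2 (h x)

theorem mulVec_XvecR_injective {d t : ℕ} {n : Type*} {M N : Matrix n (Sym (Fin d) t) ℂ}
    (h : ∀ x, M *ᵥ XvecR d t x = N *ᵥ XvecR d t x) : M = N :=
  funext fun j => dotProduct_XvecR_injective fun x => congrFun (h x) j

theorem eq_of_sum_mulVec_XvecR_eq {d s : ℕ} {n : Type*}
    {M N : (t : ℕ) → Matrix n (Sym (Fin d) t) ℂ}
    (h : ∀ x, ∑ t ∈ range (s + 1), M t *ᵥ XvecR d t x = ∑ t ∈ range (s + 1), N t *ᵥ XvecR d t x)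
    {t : ℕ} (ht : t ≤ s) : M t = N t := by
  ext j m
  have hind := linearIndependent_iff'.1 (linearIndependent_XvecR d)
    ((range (s + 1)).sigma fun _ => univ) (fun p => M p.1 j p.2 - N p.1 j p.2) (funext fun x => ?_)
    ⟨t, m⟩ (by simpa using Nat.lt_succ_of_le ht)
  · exact sub_eq_zero.1 hind
  · simp only [Finset.sum_apply, Pi.smul_apply, smul_eq_mul, sub_mul, Finset.sum_sub_distrib,
      Finset.sum_sigma, Pi.zero_apply]
    simpa [mulVec, dotProduct] using sub_eq_zero.2 (congrFun (h x) j)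

namespace IsMonMat

variable {d t : ℕ} {b b' : Matrix (Fin d) (Fin d) ℝ}
  {bt bt' : Matrix (Sym (Fin d) t) (Sym (Fin d) t) ℂ}

theorem mul (h : IsMonMat d t b bt) (h' : IsMonMat d t b' bt') : IsMonMat d t (b * b') (bt * bt') :=
  fun x => by rw [← mulVec_mulVec, h, h', mulVec_mulVec]

theorem unique (h : IsMonMat d t b bt) (h' : IsMonMat d t b bt') : bt = bt' :=
  mulVec_XvecR_injective fun x => by rw [← h, h']

theorem isUnit (hb : IsUnit b.det) (h : IsMonMat d t b bt) : IsUnit bt := by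
  refine vecMul_injective_iff_isUnit.1 fun c c' hc => dotProduct_XvecR_injective fun y => ?_
  have hy : y = b *ᵥ (b⁻¹ *ᵥ y) := by rw [mulVec_mulVec, mul_nonsing_inv b hb, one_mulVec]
  rw [hy, h, dotProduct_mulVec, dotProduct_mulVec]
  exact congrArg (· ⬝ᵥ _) hc

theorem XvecR_inv_mulVec (hb : IsUnit b.det) (h : IsMonMat d t b bt) (x : Fin d → ℝ) :
    XvecR d t (b⁻¹ *ᵥ x) = bt⁻¹ *ᵥ XvecR d t x := by
  have hx : XvecR d t x = bt *ᵥ XvecR d t (b⁻¹ *ᵥ x) := by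
    rw [← h, mulVec_mulVec, mul_nonsing_inv b hb, one_mulVec]
  rw [hx, mulVec_mulVec, nonsing_inv_mul _ ((isUnit_iff_isUnit_det _).1 (h.isUnit hb)), one_mulVec]

end IsMonMat

theorem XvecR_inv_mulVec_sub {d : ℕ}
    {Q : (s : ℕ) → (t : ℕ) → (Fin d → ℝ) → Matrix (Sym (Fin d) s) (Sym (Fin d) t) ℂ}
    (hQ : IsQfam d Q) {b : Matrix (Fin d) (Fin d) ℝ} (hb : IsUnit b.det)
    {bm : (u : ℕ) → Matrix (Sym (Fin d) u) (Sym (Fin d) u) ℂ} (hbm : ∀ u, IsMonMat d u b (bm u))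
    (s : ℕ) (l x : Fin d → ℝ) :
    XvecR d s (b⁻¹ *ᵥ x - l) = ∑ t ∈ range (s + 1), (Q s t l * (bm t)⁻¹) *ᵥ XvecR d t x := by
  simp only [hQ s l, (hbm _).XvecR_inv_mulVec hb, mulVec_mulVec]

theorem Qtilde_cocycle_translation {d : ℕ}
    {Q : (s : ℕ) → (t : ℕ) → (Fin d → ℝ) → Matrix (Sym (Fin d) s) (Sym (Fin d) t) ℂ}
    (hQ : IsQfam d Q) {b : Matrix (Fin d) (Fin d) ℝ} (hb : IsUnit b.det)
    {bm : (u : ℕ) → Matrix (Sym (Fin d) u) (Sym (Fin d) u) ℂ} (hbm : ∀ u, IsMonMat d u b (bm u))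
    (l₁ l₂ : Fin d → ℝ) {s t : ℕ} (ht : t ≤ s) :
    Q s t (l₂ + b⁻¹ *ᵥ l₁) * (bm t)⁻¹ = ∑ u ∈ Icc t s, Q s u l₂ * (bm u)⁻¹ * Q u t l₁ := by
  refine eq_of_sum_mulVec_XvecR_eq (M := fun t => Q s t (l₂ + b⁻¹ *ᵥ l₁) * (bm t)⁻¹)
    (N := fun t => ∑ u ∈ Icc t s, Q s u l₂ * (bm u)⁻¹ * Q u t l₁) (fun x => ?_) ht
  -- `(γ₁γ₂)⁻¹ = γ₂⁻¹ ∘ γ₁⁻¹` for `γ₁ = (1, l₁)`, `γ₂ = (b, l₂)`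
  have hshift : b⁻¹ *ᵥ x - (l₂ + b⁻¹ *ᵥ l₁) = b⁻¹ *ᵥ (x - l₁) - l₂ := by
    rw [mulVec_sub]; abel
  calc ∑ t ∈ range (s + 1), (Q s t (l₂ + b⁻¹ *ᵥ l₁) * (bm t)⁻¹) *ᵥ XvecR d t x
      = XvecR d s (b⁻¹ *ᵥ (x - l₁) - l₂) := by rw [← hshift, XvecR_inv_mulVec_sub hQ hb hbm]
    _ = ∑ u ∈ range (s + 1), ∑ t ∈ range (u + 1),
          (Q s u l₂ * (bm u)⁻¹ * Q u t l₁) *ᵥ XvecR d t x := by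
      simp only [XvecR_inv_mulVec_sub hQ hb hbm, hQ _ l₁ x, mulVec_sum, mulVec_mulVec]
    _ = ∑ t ∈ range (s + 1), (∑ u ∈ Icc t s, Q s u l₂ * (bm u)⁻¹ * Q u t l₁) *ᵥ XvecR d t x := by
      simp only [sum_mulVec]
      exact Finset.sum_comm' fun u t => by simp only [mem_range, mem_Icc]; omega

theorem IsSplittingCrystal.isUnit_det {d : ℕ} {G : Finset (Matrix (Fin d) (Fin d) ℝ)}
    {Λ : Set (Fin d → ℝ)} (hcr : IsSplittingCrystal d G Λ) {b : Matrix (Fin d) (Fin d) ℝ}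
    (hb : b ∈ G) : IsUnit b.det :=
  isUnit_det_of_right_inverse (hcr.2.2.2.1 b hb)

/-- Here `Q s t l * (bm t)⁻¹` is `Q̃_[s,t]((b, l))`, and `crystMul (b₁, l₁) (b₂, l₂)` is `γ₁γ₂`. -/
theorem Qtilde_cocycle_general (d s t : ℕ) (ht : t ≤ s)
    (G : Finset (Matrix (Fin d) (Fin d) ℝ)) (Λ : Set (Fin d → ℝ))
    (hcr : IsSplittingCrystal d G Λ)
    (Q : (s : ℕ) → (t : ℕ) → (Fin d → ℝ) → Matrix (Sym (Fin d) s) (Sym (Fin d) t) ℂ)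
    (hQ : IsQfam d Q)
    (b₁ b₂ : Matrix (Fin d) (Fin d) ℝ) (l₁ l₂ : Fin d → ℝ)
    (hγ₂ : ((b₂, l₂) : CrystElem d) ∈ crystSet G Λ)
    (b1m b2m b12m : (u : ℕ) → Matrix (Sym (Fin d) u) (Sym (Fin d) u) ℂ)
    (hb1 : ∀ u, IsMonMat d u b₁ (b1m u))
    (hb2 : ∀ u, IsMonMat d u b₂ (b2m u))
    (hb12 : ∀ u, IsMonMat d u (b₁ * b₂) (b12m u)) :
    Q s t (crystMul (b₁, l₁) (b₂, l₂)).2 * (b12m t)⁻¹ =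
      ∑ u ∈ Finset.Icc t s, (Q s u l₂ * (b2m u)⁻¹) * (Q u t l₁ * (b1m t)⁻¹) := by
  have hb₂ : IsUnit b₂.det := hcr.isUnit_det hγ₂.1
  calc Q s t (crystMul (b₁, l₁) (b₂, l₂)).2 * (b12m t)⁻¹
      = Q s t (l₂ + b₂⁻¹ *ᵥ l₁) * (b2m t)⁻¹ * (b1m t)⁻¹ := by
        rw [(hb12 t).unique ((hb1 t).mul (hb2 t)), Matrix.mul_inv_rev, Matrix.mul_assoc]; rfl
    _ = ∑ u ∈ Icc t s, (Q s u l₂ * (b2m u)⁻¹) * (Q u t l₁ * (b1m t)⁻¹) := by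
        rw [Qtilde_cocycle_translation hQ hb₂ hb2 l₁ l₂ ht, Matrix.sum_mul]
        simp only [Matrix.mul_assoc]

/-- The cocycle identity for `Q̃`: for `γ₁ = (b₁,l₁)`, `γ₂ = (b₂,l₂)` in a splitting
crystal group `Γ = G ⋉ Λ`,
`Q̃_[s,t](γ₁γ₂) = ∑_{u=t}^{s} Q̃_[s,u](γ₂) Q̃_[u,t](γ₁)`,
where `Q̃_[s,t]((b,l)) = Q_[s,t](l) b_[t]⁻¹` and `γ₁γ₂ = (b₁b₂, l₂ + b₂⁻¹l₁)`. -/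
theorem Qtilde_cocycle (d s t : ℕ) (ht : t ≤ s)
    (G : Finset (Matrix (Fin d) (Fin d) ℝ)) (Λ : Set (Fin d → ℝ))
    (hcr : IsSplittingCrystal d G Λ)
    (Q : (s : ℕ) → (t : ℕ) → (Fin d → ℝ) → Matrix (Sym (Fin d) s) (Sym (Fin d) t) ℂ)
    (hQ : IsQfam d Q)
    (b₁ b₂ : Matrix (Fin d) (Fin d) ℝ) (l₁ l₂ : Fin d → ℝ)
    (hγ₁ : ((b₁, l₁) : CrystElem d) ∈ crystSet G Λ)
    (hγ₂ : ((b₂, l₂) : CrystElem d) ∈ crystSet G Λ)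
    (b1m b2m b12m : (u : ℕ) → Matrix (Sym (Fin d) u) (Sym (Fin d) u) ℂ)
    (hb1 : ∀ u, IsMonMat d u b₁ (b1m u))
    (hb2 : ∀ u, IsMonMat d u b₂ (b2m u))
    (hb12 : ∀ u, IsMonMat d u (b₁ * b₂) (b12m u)) :
    Q s t (crystMul (b₁, l₁) (b₂, l₂)).2 * (b12m t)⁻¹ =
      ∑ u ∈ Finset.Icc t s, (Q s u l₂ * (b2m u)⁻¹) * (Q u t l₁ * (b1m t)⁻¹) :=
  Qtilde_cocycle_general d s t ht G Λ hcr Q hQ b₁ b₂ l₁ l₂ hγ₂ b1m b2m b12m hb1 hb2 hb12
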